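/- Fix Δ ∈ (0,1) and suppose the common density g of the overlaps satisfies g(1−x) = c·x^β + O(x^{β+δ}) as x → 0⁺ for some constants c, δ, β > 0. Then there exist positive constants c₁, c₂ (independent of n) such that lim_{n→∞} P( c₁ < N_Δ / (|log Δ|·n) < c₂ ) = 1. -/

import Mathlib

/-!
Fix `n`, write `b i` for the stay-probabilities (`b z = 1` at the correct concept `z`) and
`R = ∑_{i ≠ z} (1 - b i)⁻¹`. Two deterministic estimates trap `N_Δ` between multiples of `n`:

* every `i ≠ z` sends at most the fraction `1/(n-1)` of its mass to `z` per step, so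
  `Q_N ≤ (N + 1)/(n - 1)` and hence `N_Δ ≥ (1 - Δ)(n - 1) - 1`;
* the potential `h i = (1 - b i)⁻¹ + R` (and `h z = 0`) drops in mean by at least `1` per
  step spent away from `z`, so `∑_{N < M} (1 - Q_N)` is at most the initial mean
  `(1/n) ∑ h = R` of `h`; as `Q_N` is nondecreasing, `1 - Q_M ≤ R / (M + 1)`, hence `N_Δ < R/Δ + 1`.

Finally `R ≤ ∑_{i < n} (1 - a i)⁻¹`. The bound `g(1 - t) = O(t^β)` with `β > 0` makes
`(1 - a i)⁻¹` integrable, so by the strong law of large numbers `R ≤ K n` with probability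
tending to one. Since `Δ` is fixed, the factor `|log Δ|` is absorbed into the constants.
-/

open MeasureTheory ProbabilityTheory Filter

lemma isBigO_rpow_of_isBigO_sub {f : ℝ → ℝ} {c β δ : ℝ} (hδ : 0 ≤ δ)
    (hf : (fun t => f t - c * t ^ β) =O[nhdsWithin 0 (Set.Ioi 0)] fun t => t ^ (β + δ)) :
    f =O[nhdsWithin 0 (Set.Ioi 0)] fun t => t ^ β := by
  have hpow : (fun t : ℝ => t ^ (β + δ)) =O[nhdsWithin 0 (Set.Ioi 0)] fun t => t ^ β := by
    refine Asymptotics.IsBigO.of_bound 1 ?_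
    filter_upwards [Ioo_mem_nhdsGT one_pos] with t ht
    rw [one_mul, Real.norm_of_nonneg (Real.rpow_nonneg ht.1.le _),
      Real.norm_of_nonneg (Real.rpow_nonneg ht.1.le _)]
    exact Real.rpow_le_rpow_of_exponent_ge ht.1 ht.2.le (by linarith)
  simpa using (hf.trans hpow).add ((Asymptotics.isBigO_refl _ _).const_mul_left c)

lemma integrableOn_one_sub_rpow {β η : ℝ} (hβ : -1 < β) (hη : 0 < η) :
    IntegrableOn (fun t : ℝ => (1 - t) ^ β) (Set.Ioo (1 - η) 1) := by
  have := (intervalIntegral.intervalIntegrable_rpow' (a := 0) (b := η) hβ).comp_sub_left 1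
  rw [sub_zero] at this
  exact (intervalIntegrable_iff_integrableOn_Ioo_of_le (by linarith)).mp this.symm

lemma lintegral_ofReal_inv_one_sub_lt_top {g : ℝ → ℝ} {β : ℝ} (hβ : 0 < β)
    [IsFiniteMeasure (volume.withDensity fun t => ENNReal.ofReal (g t))]
    (hg : (fun t => g (1 - t)) =O[nhdsWithin 0 (Set.Ioi 0)] fun t => t ^ β) :
    ∫⁻ t, ENNReal.ofReal (1 - t)⁻¹ ∂(volume.withDensity fun t => ENNReal.ofReal (g t)) < ⊤ := by
  set ν := volume.withDensity fun t => ENNReal.ofReal (g t) with hν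
  obtain ⟨C, hC⟩ := hg.bound
  obtain ⟨η, hη, hCη⟩ := mem_nhdsGT_iff_exists_Ioo_subset.mp hC
  have hη : 0 < η := hη
  set I := Set.Ioo (1 - η) 1
  have hI : MeasurableSet I := measurableSet_Ioo
  rw [← lintegral_add_compl _ hI]
  refine ENNReal.add_lt_top.mpr ⟨?_, ?_⟩
  · -- `g` need not be measurable, so we dominate the measure rather than the integrand.
    have hdom : ν.restrict I
        ≤ (volume.restrict I).withDensity fun t => ENNReal.ofReal (C * (1 - t) ^ β) := by
      rw [hν, restrict_withDensity hI]
      refine withDensity_mono ((ae_restrict_iff' hI).mpr (ae_of_all _ fun t ht => ?_))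
      have hbound : ‖g (1 - (1 - t))‖ ≤ C * ‖(1 - t) ^ β‖ :=
        hCη ⟨sub_pos.mpr ht.2, by linarith [ht.1]⟩
      simp only [sub_sub_cancel, Real.norm_eq_abs,
        abs_of_nonneg (Real.rpow_nonneg (sub_pos.mpr ht.2).le β)] at hbound
      exact ENNReal.ofReal_le_ofReal ((le_abs_self _).trans hbound)
    calc ∫⁻ t in I, ENNReal.ofReal (1 - t)⁻¹ ∂ν
        ≤ ∫⁻ t, ENNReal.ofReal (1 - t)⁻¹
            ∂((volume.restrict I).withDensity fun t => ENNReal.ofReal (C * (1 - t) ^ β)) :=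
          lintegral_mono' hdom le_rfl
      _ = ∫⁻ t in I, ENNReal.ofReal (C * (1 - t) ^ (β - 1)) := by
          rw [lintegral_withDensity_eq_lintegral_mul _ (by fun_prop) (by fun_prop)]
          refine setLIntegral_congr_fun hI fun t ht => ?_
          have h1t : 0 < 1 - t := sub_pos.mpr ht.2
          rw [Pi.mul_apply, ← ENNReal.ofReal_mul' (inv_nonneg.mpr h1t.le),
            Real.rpow_sub_one h1t.ne']
          ring_nf
      _ < ⊤ := ((integrableOn_one_sub_rpow (by linarith) hη).const_mul C).lintegral_lt_top
  · calc ∫⁻ t in Iᶜ, ENNReal.ofReal (1 - t)⁻¹ ∂ν ≤ ∫⁻ t in Iᶜ, ENNReal.ofReal η⁻¹ ∂ν := by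
          refine setLIntegral_mono measurable_const fun t ht => ENNReal.ofReal_le_ofReal ?_
          rcases le_or_gt t (1 - η) with h | h
          · exact inv_anti₀ hη (by linarith)
          · have : 1 ≤ t := by simpa [I, h] using ht
            exact (inv_nonpos.mpr (by linarith)).trans (inv_pos.mpr hη).le
      _ < ⊤ := by
          rw [setLIntegral_const]
          exact ENNReal.mul_lt_top ENNReal.ofReal_lt_top (measure_lt_top _ _)

lemma integrable_inv_one_sub_of_map_eq_withDensity {Ω : Type*} [MeasurableSpace Ω]
    {P : Measure Ω} [IsFiniteMeasure P] {Y : Ω → ℝ} (hY : Measurable Y) (hY1 : ∀ ω, Y ω < 1)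
    {g : ℝ → ℝ} {β : ℝ} (hβ : 0 < β)
    (hlaw : P.map Y = volume.withDensity fun t => ENNReal.ofReal (g t))
    (hg : (fun t => g (1 - t)) =O[nhdsWithin 0 (Set.Ioi 0)] fun t => t ^ β) :
    Integrable (fun ω => (1 - Y ω)⁻¹) P := by
  have hinv : Measurable fun t : ℝ => (1 - t)⁻¹ := by fun_prop
  have : IsFiniteMeasure (volume.withDensity fun t => ENNReal.ofReal (g t)) :=
    hlaw ▸ inferInstance
  refine ⟨(hinv.comp hY).aestronglyMeasurable, ?_⟩
  rw [hasFiniteIntegral_iff_ofReal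
      (ae_of_all _ fun ω => inv_nonneg.mpr (sub_nonneg.mpr (hY1 ω).le)),
    ← lintegral_map hinv.ennreal_ofReal hY, hlaw]
  exact lintegral_ofReal_inv_one_sub_lt_top hβ hg

lemma tendsto_measure_of_ae_eventually_mem {Ω : Type*} [MeasurableSpace Ω] {P : Measure Ω}
    [IsProbabilityMeasure P] {A : ℕ → Set Ω} (h : ∀ᵐ ω ∂P, ∀ᶠ n in atTop, ω ∈ A n) :
    Tendsto (fun n => P (A n)) atTop (nhds 1) := by
  set C : ℕ → Set Ω := fun n => {ω | ∀ k, n ≤ k → ω ∈ A k}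
  have hmono : Monotone C := fun m m' hm ω hω k hk => hω k (hm.trans hk)
  have hfull : P (⋃ n, C n) = 1 := by
    have hC : ⋃ n, C n = {ω | ∀ᶠ n in atTop, ω ∈ A n} := by
      ext ω
      simp [C, eventually_atTop]
    rw [hC, ← measure_univ (μ := P)]
    exact measure_congr (ae_eq_univ.mpr (mem_ae_iff.mp h))
  refine tendsto_of_tendsto_of_tendsto_of_le_of_le (hfull ▸ tendsto_measure_iUnion_atTop hmono)
    tendsto_const_nhds (fun n => measure_mono fun ω (hω : ∀ k, n ≤ k → ω ∈ A k) => hω n le_rfl)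
    fun n => prob_le_one

lemma tendsto_measure_sum_le_mul {Ω : Type*} [MeasurableSpace Ω] {P : Measure Ω}
    [IsProbabilityMeasure P] {X : ℕ → Ω → ℝ} (hint : Integrable (X 0) P)
    (hindep : Pairwise fun i j => IndepFun (X i) (X j) P)
    (hident : ∀ i, IdentDistrib (X i) (X 0) P P)
    {K : ℝ} (hK : P[X 0] < K) :
    Tendsto (fun n : ℕ => P {ω | ∑ i ∈ Finset.range n, X i ω ≤ K * n}) atTop (nhds 1) := by
  refine tendsto_measure_of_ae_eventually_mem ?_
  filter_upwards [strong_law_ae_real X hint hindep hident] with ω hω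
  filter_upwards [hω.eventually_lt_const hK, eventually_gt_atTop 0] with n hn hn0
  exact ((div_lt_iff₀ (Nat.cast_pos.mpr hn0)).mp hn).le

lemma exists_pos_tendsto_measure_sum_inv_one_sub_le {Ω : Type*} [MeasurableSpace Ω]
    {P : Measure Ω} [IsProbabilityMeasure P] {a : ℕ → Ω → ℝ} (hmeas : ∀ i, Measurable (a i))
    (hindep : iIndepFun a P) (ha : ∀ i ω, a i ω < 1) {g : ℝ → ℝ} {β : ℝ} (hβ : 0 < β)
    (hlaw : ∀ i, P.map (a i) = volume.withDensity fun t => ENNReal.ofReal (g t))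
    (hg : (fun t => g (1 - t)) =O[nhdsWithin 0 (Set.Ioi 0)] fun t => t ^ β) :
    ∃ K, 0 < K ∧ Tendsto (fun n : ℕ => P {ω | ∑ i ∈ Finset.range n, (1 - a i ω)⁻¹ ≤ K * n})
      atTop (nhds 1) := by
  have hinv : Measurable fun t : ℝ => (1 - t)⁻¹ := by fun_prop
  have hnonneg : 0 ≤ fun ω => (1 - a 0 ω)⁻¹ := fun ω =>
    inv_nonneg.mpr (sub_nonneg.mpr (ha 0 ω).le)
  refine ⟨P[fun ω => (1 - a 0 ω)⁻¹] + 1, by linarith [integral_nonneg (μ := P) hnonneg],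
    tendsto_measure_sum_le_mul (X := fun i ω => (1 - a i ω)⁻¹) ?_
      (fun i j hij => (hindep.indepFun hij).comp hinv hinv) (fun i => ?_) (lt_add_one _)⟩
  · exact integrable_inv_one_sub_of_map_eq_withDensity (hmeas 0) (ha 0) hβ (hlaw 0) hg
  · exact (show IdentDistrib (a i) (a 0) P P from ⟨(hmeas i).aemeasurable,
      (hmeas 0).aemeasurable, (hlaw i).trans (hlaw 0).symm⟩).comp hinv

namespace MemorylessLearner

open Matrix Finset

variable {n : ℕ} {b : Fin n → ℝ} {z : Fin n}

noncomputable def transitionMatrix (n : ℕ) (b : Fin n → ℝ) : Matrix (Fin n) (Fin n) ℝ :=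
  Matrix.of fun i j => if i = j then b i else (1 - b i) / ((n : ℝ) - 1)

noncomputable def distribution (n : ℕ) (b : Fin n → ℝ) (N : ℕ) : Fin n → ℝ :=
  (fun _ => 1 / (n : ℝ)) ᵥ* transitionMatrix n b ^ N

noncomputable def convergenceTime (n : ℕ) (b : Fin n → ℝ) (z : Fin n) (Δ : ℝ) : ℕ :=
  sInf {N | ∀ M, N ≤ M → 1 - Δ ≤ distribution n b M z}

lemma distribution_succ (N : ℕ) :
    distribution n b (N + 1) = distribution n b N ᵥ* transitionMatrix n b := by
  rw [distribution, distribution, vecMul_vecMul, pow_succ]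

lemma sum_transitionMatrix_mul (i : Fin n) (v : Fin n → ℝ) :
    ∑ j, transitionMatrix n b i j * v j
      = b i * v i + (1 - b i) / ((n : ℝ) - 1) * (∑ j, v j - v i) := by
  rw [Fintype.sum_eq_add_sum_compl i, Fintype.sum_eq_add_sum_compl i v, add_sub_cancel_left,
    mul_sum]
  congr 1
  · simp [transitionMatrix]
  · refine sum_congr rfl fun j hj => ?_
    have hij : i ≠ j := by rintro rfl; simp at hj
    simp [transitionMatrix, hij]

noncomputable def holdingTimeSum (b : Fin n → ℝ) (z : Fin n) : ℝ :=
  ∑ i ∈ {z}ᶜ, (1 - b i)⁻¹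

/-- `n / (n - 1)` times the expected hitting time of `z` from `i`. -/
noncomputable def potential (b : Fin n → ℝ) (z : Fin n) (i : Fin n) : ℝ :=
  if i = z then 0 else (1 - b i)⁻¹ + holdingTimeSum b z

lemma holdingTimeSum_nonneg (hb : ∀ i, b i ≤ 1) : 0 ≤ holdingTimeSum b z :=
  sum_nonneg fun i _ => inv_nonneg.mpr (sub_nonneg.mpr (hb i))

lemma sum_potential : ∑ i, potential b z i = n * holdingTimeSum b z := by
  have h1 : 1 ≤ n := z.pos
  rw [Fintype.sum_eq_add_sum_compl z, potential, if_pos rfl, zero_add]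
  have hoff : ∀ i ∈ ({z}ᶜ : Finset (Fin n)),
      potential b z i = (1 - b i)⁻¹ + holdingTimeSum b z := fun i hi => if_neg (by simpa using hi)
  rw [sum_congr rfl hoff, sum_add_distrib, sum_const,
    card_compl, card_singleton, Fintype.card_fin, nsmul_eq_mul, Nat.cast_sub h1]
  simp only [holdingTimeSum]
  ring

lemma potential_nonneg (hb : ∀ i, b i ≤ 1) : 0 ≤ potential b z := by
  intro i
  simp only [potential, Pi.zero_apply]
  split_ifs
  · rfl
  · exact add_nonneg (inv_nonneg.mpr (sub_nonneg.mpr (hb i))) (holdingTimeSum_nonneg hb)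

lemma transitionMatrix_mulVec_potential_le (hn : 2 ≤ n) (hbz : b z = 1)
    (hblt : ∀ i, i ≠ z → b i < 1) :
    transitionMatrix n b *ᵥ potential b z ≤ potential b z - (1 - Pi.single z 1) := by
  have h : (0 : ℝ) < n - 1 := sub_pos.mpr (Nat.one_lt_cast.mpr hn)
  intro i
  simp only [mulVec, dotProduct]
  rw [sum_transitionMatrix_mul, sum_potential]
  by_cases hi : i = z
  · subst hi
    simp [potential, hbz]
  · have hbi : 0 < 1 - b i := sub_pos.mpr (hblt i hi)
    simp only [potential, if_neg hi, Pi.sub_apply, Pi.one_apply, Pi.single_apply, sub_zero]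
    have key : b i * ((1 - b i)⁻¹ + holdingTimeSum b z) + (1 - b i) / ((n : ℝ) - 1) *
        (n * holdingTimeSum b z - ((1 - b i)⁻¹ + holdingTimeSum b z))
        = (1 - b i)⁻¹ + holdingTimeSum b z - 1 - 1 / ((n : ℝ) - 1) := by
      field_simp
      ring
    rw [key]
    linarith [one_div_pos.mpr h]

section Stochastic

variable (hn : 2 ≤ n) (hb : ∀ i, b i ∈ Set.Icc 0 1)
include hn

lemma sum_transitionMatrix (i : Fin n) : ∑ j, transitionMatrix n b i j = 1 := by
  have h : (0 : ℝ) < n - 1 := sub_pos.mpr (Nat.one_lt_cast.mpr hn)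
  have := sum_transitionMatrix_mul (b := b) i 1
  simp only [Pi.one_apply, mul_one, sum_const, card_univ, Fintype.card_fin, nsmul_eq_mul] at this
  rw [this]
  field_simp
  ring

include hb

lemma transitionMatrix_mem_rowStochastic : transitionMatrix n b ∈ rowStochastic ℝ (Fin n) := by
  refine mem_rowStochastic_iff_sum.mpr ⟨fun i j => ?_, sum_transitionMatrix hn⟩
  have h : (0 : ℝ) < n - 1 := sub_pos.mpr (Nat.one_lt_cast.mpr hn)
  simp only [transitionMatrix, of_apply]
  split_ifs
  · exact (hb i).1
  · exact div_nonneg (by linarith [(hb i).2]) h.le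

lemma distribution_nonneg (N : ℕ) : 0 ≤ distribution n b N :=
  nonneg_vecMul_of_mem_rowStochastic (pow_mem (transitionMatrix_mem_rowStochastic hn hb) N)
    fun _ => by positivity

lemma sum_distribution (N : ℕ) : ∑ i, distribution n b N i = 1 := by
  rw [← dotProduct_one]
  refine vecMul_dotProduct_one_eq_one_rowStochastic
    (pow_mem (transitionMatrix_mem_rowStochastic hn hb) N) ?_
  have : (n : ℝ) ≠ 0 := by positivity
  simp [dotProduct_one, this]

variable (hbz : b z = 1)
include hbz

lemma distribution_apply_mono : Monotone fun N => distribution n b N z := by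
  refine monotone_nat_of_le_succ fun N => ?_
  simp only [distribution_succ]
  calc distribution n b N z = distribution n b N z * transitionMatrix n b z z := by
        simp [transitionMatrix, hbz]
    _ ≤ ∑ i, distribution n b N i * transitionMatrix n b i z :=
        single_le_sum (f := fun i => distribution n b N i * transitionMatrix n b i z)
          (fun i _ => mul_nonneg (distribution_nonneg hn hb N i)
          (nonneg_of_mem_rowStochastic (transitionMatrix_mem_rowStochastic hn hb)))
          (mem_univ z)

lemma distribution_apply_succ_le_add (N : ℕ) :
    distribution n b (N + 1) z ≤ distribution n b N z + 1 / ((n : ℝ) - 1) := by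
  have h : (0 : ℝ) < n - 1 := sub_pos.mpr (Nat.one_lt_cast.mpr hn)
  have hcol : (fun i => transitionMatrix n b i z) ≤ Pi.single z 1 + fun _ => 1 / ((n : ℝ) - 1) := by
    intro i
    by_cases hi : i = z
    · subst hi
      simp [transitionMatrix, hbz, h.le]
    · simp only [transitionMatrix, of_apply, if_neg hi, Pi.add_apply, Pi.single_apply, zero_add]
      gcongr
      linarith [(hb i).1]
  rw [distribution_succ]
  calc (distribution n b N ᵥ* transitionMatrix n b) z
      ≤ distribution n b N ⬝ᵥ (Pi.single z 1 + fun _ => 1 / ((n : ℝ) - 1)) :=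
        dotProduct_le_dotProduct_of_nonneg_left hcol (distribution_nonneg hn hb N)
    _ = distribution n b N z + 1 / ((n : ℝ) - 1) := by
        rw [dotProduct_add, dotProduct_single, mul_one, dotProduct, ← sum_mul,
          sum_distribution hn hb, one_mul]

lemma distribution_apply_le (N : ℕ) : distribution n b N z ≤ (N + 1) / ((n : ℝ) - 1) := by
  induction N with
  | zero =>
    have h : (0 : ℝ) < n - 1 := sub_pos.mpr (Nat.one_lt_cast.mpr hn)
    simp only [distribution, pow_zero, vecMul_one, Nat.cast_zero, zero_add]
    gcongr
    linarith
  | succ N ih =>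
    calc distribution n b (N + 1) z ≤ distribution n b N z + 1 / ((n : ℝ) - 1) :=
          distribution_apply_succ_le_add hn hb hbz N
      _ ≤ (N + 1 + 1) / ((n : ℝ) - 1) := by rw [add_div]; gcongr
      _ = ((N + 1 : ℕ) + 1) / ((n : ℝ) - 1) := by push_cast; rfl

variable (hblt : ∀ i, i ≠ z → b i < 1)
include hblt

lemma distribution_succ_dotProduct_potential_le (N : ℕ) :
    distribution n b (N + 1) ⬝ᵥ potential b z
      ≤ distribution n b N ⬝ᵥ potential b z - (1 - distribution n b N z) := by
  rw [distribution_succ, ← dotProduct_mulVec]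
  calc distribution n b N ⬝ᵥ (transitionMatrix n b *ᵥ potential b z)
      ≤ distribution n b N ⬝ᵥ (potential b z - (1 - Pi.single z 1)) :=
        dotProduct_le_dotProduct_of_nonneg_left
          (transitionMatrix_mulVec_potential_le hn hbz hblt) (distribution_nonneg hn hb N)
    _ = _ := by
        rw [dotProduct_sub, dotProduct_sub, dotProduct_one, dotProduct_single,
          sum_distribution hn hb, mul_one]

lemma sum_range_one_sub_distribution_le (M : ℕ) :
    ∑ N ∈ range M, (1 - distribution n b N z) ≤ holdingTimeSum b z := by
  set Φ : ℕ → ℝ := fun N => distribution n b N ⬝ᵥ potential b z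
  have hΦ0 : Φ 0 = holdingTimeSum b z := by
    have : (n : ℝ) ≠ 0 := by positivity
    simp only [Φ, distribution, pow_zero, vecMul_one, dotProduct, ← mul_sum, sum_potential]
    field_simp
  calc ∑ N ∈ range M, (1 - distribution n b N z) ≤ ∑ N ∈ range M, (Φ N - Φ (N + 1)) :=
        sum_le_sum fun N _ => by
          linarith [distribution_succ_dotProduct_potential_le hn hb hbz hblt N]
    _ = Φ 0 - Φ M := sum_range_sub' Φ M
    _ ≤ holdingTimeSum b z := by
        rw [hΦ0, sub_le_self_iff]
        exact dotProduct_nonneg_of_nonneg (distribution_nonneg hn hb M)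
          (potential_nonneg fun i => (hb i).2)

lemma one_sub_distribution_le (M : ℕ) :
    1 - distribution n b M z ≤ holdingTimeSum b z / (M + 1) := by
  have hmono := distribution_apply_mono hn hb hbz
  rw [le_div_iff₀ (by positivity), mul_comm]
  calc ((M : ℝ) + 1) * (1 - distribution n b M z)
      = #(range (M + 1)) • (1 - distribution n b M z) := by simp
    _ ≤ ∑ N ∈ range (M + 1), (1 - distribution n b N z) :=
        card_nsmul_le_sum _ _ _ fun N hN =>
          sub_le_sub_left (hmono (Nat.lt_succ_iff.mp (mem_range.mp hN))) 1
    _ ≤ holdingTimeSum b z := sum_range_one_sub_distribution_le hn hb hbz hblt (M + 1)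

variable {Δ : ℝ} (hΔ : 0 < Δ)
include hΔ

lemma one_sub_le_distribution_of_ceil_le :
    ∀ M, ⌈holdingTimeSum b z / Δ⌉₊ ≤ M → 1 - Δ ≤ distribution n b M z := by
  intro M hM
  have hRM : holdingTimeSum b z / (M + 1) ≤ Δ := by
    have := (div_le_iff₀ hΔ).mp (Nat.ceil_le.mp hM)
    rw [div_le_iff₀ (by positivity)]
    linarith
  linarith [one_sub_distribution_le hn hb hbz hblt M]

lemma convergenceTime_lt : (convergenceTime n b z Δ : ℝ) < holdingTimeSum b z / Δ + 1 := by
  have hR := holdingTimeSum_nonneg (z := z) fun i => (hb i).2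
  have hle : convergenceTime n b z Δ ≤ ⌈holdingTimeSum b z / Δ⌉₊ :=
    Nat.sInf_le (one_sub_le_distribution_of_ceil_le hn hb hbz hblt hΔ)
  calc (convergenceTime n b z Δ : ℝ) ≤ ⌈holdingTimeSum b z / Δ⌉₊ := by exact_mod_cast hle
    _ < holdingTimeSum b z / Δ + 1 := Nat.ceil_lt_add_one (by positivity)

lemma le_convergenceTime : (1 - Δ) * ((n : ℝ) - 1) - 1 ≤ convergenceTime n b z Δ := by
  have h : (0 : ℝ) < n - 1 := sub_pos.mpr (Nat.one_lt_cast.mpr hn)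
  have hmem : ∀ M, convergenceTime n b z Δ ≤ M → 1 - Δ ≤ distribution n b M z :=
    Nat.sInf_mem (s := {N | ∀ M, N ≤ M → 1 - Δ ≤ distribution n b M z})
      ⟨_, one_sub_le_distribution_of_ceil_le hn hb hbz hblt hΔ⟩
  have := (le_div_iff₀ h).mp ((hmem _ le_rfl).trans (distribution_apply_le hn hb hbz _))
  linarith

end Stochastic

lemma convergenceTime_div_mem_Ioo (hb : ∀ i, b i ∈ Set.Icc 0 1) (hbz : b z = 1)
    (hblt : ∀ i, i ≠ z → b i < 1) {Δ K L : ℝ} (hΔ : 0 < Δ) (hΔ1 : Δ < 1) (hL : 0 < L)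
    (hnΔ : 2 + 2 / (1 - Δ) < n) (hR : holdingTimeSum b z ≤ K * n) :
    (1 - Δ) / (2 * L) < convergenceTime n b z Δ / (L * n) ∧
      convergenceTime n b z Δ / (L * n) < (K / Δ + 1) / L := by
  have hΔ1' : 0 < 1 - Δ := sub_pos.mpr hΔ1
  have hn2 : (2 : ℝ) < n := by linarith [div_pos two_pos hΔ1']
  have hn : 2 ≤ n := by exact_mod_cast hn2.le
  have hlow := le_convergenceTime hn hb hbz hblt hΔ
  have hupp := convergenceTime_lt hn hb hbz hblt hΔ
  have hn1 : 1 < (1 - Δ) * (n / 2 - 1) := by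
    have := (div_lt_iff₀ hΔ1').mp (by linarith : 2 / (1 - Δ) < n - 2)
    linarith
  constructor
  · rw [lt_div_iff₀ (by positivity)]
    calc (1 - Δ) / (2 * L) * (L * n) = (1 - Δ) * n / 2 := by field_simp
      _ < convergenceTime n b z Δ := by linarith
  · rw [div_lt_iff₀ (by positivity)]
    calc (convergenceTime n b z Δ : ℝ) < K * n / Δ + 1 := by
          linarith [div_le_div_of_nonneg_right hR hΔ.le]
      _ ≤ K * n / Δ + n := by linarith
      _ = (K / Δ + 1) / L * (L * n) := by field_simp

noncomputable def overlaps (n : ℕ) (x : ℕ → ℝ) (i : Fin n) : ℝ :=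
  if (i : ℕ) = 0 then 1 else x i

lemma convergenceTime_overlaps_div_mem_Ioo {x : ℕ → ℝ} (hx : ∀ i, x i ∈ Set.Ico 0 1)
    {z : Fin n} (hz : (z : ℕ) = 0) {Δ K L : ℝ} (hΔ : 0 < Δ) (hΔ1 : Δ < 1) (hL : 0 < L)
    (hnΔ : 2 + 2 / (1 - Δ) < n) (hsum : ∑ i ∈ range n, (1 - x i)⁻¹ ≤ K * n) :
    (1 - Δ) / (2 * L) < convergenceTime n (overlaps n x) z Δ / (L * n) ∧
      convergenceTime n (overlaps n x) z Δ / (L * n) < (K / Δ + 1) / L := by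
  have hne : ∀ i : Fin n, i ≠ z → (i : ℕ) ≠ 0 := fun i hi h => hi (Fin.ext (h.trans hz.symm))
  refine convergenceTime_div_mem_Ioo (fun i => ?_) (if_pos hz) (fun i hi => ?_) hΔ hΔ1 hL hnΔ ?_
  · unfold overlaps
    split_ifs
    · exact ⟨zero_le_one, le_rfl⟩
    · exact ⟨(hx i).1, (hx i).2.le⟩
  · rw [overlaps, if_neg (hne i hi)]
    exact (hx i).2
  · calc holdingTimeSum (overlaps n x) z = ∑ i ∈ {z}ᶜ, (1 - x i)⁻¹ :=
          sum_congr rfl fun i hi => by rw [overlaps, if_neg (hne i (by simpa using hi))]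
      _ ≤ ∑ i : Fin n, (1 - x i)⁻¹ := sum_le_sum_of_subset_of_nonneg (subset_univ _)
          fun i _ _ => inv_nonneg.mpr (sub_nonneg.mpr (hx i).2.le)
      _ = ∑ i ∈ range n, (1 - x i)⁻¹ := Fin.sum_univ_eq_sum_range (fun i => (1 - x i)⁻¹) n
      _ ≤ K * n := hsum

end MemorylessLearner

/-- **Convergence time of the memoryless learner, case `β > 0`.**
The overlaps `a 1, a 2, …` are i.i.d. with values in `[0,1)` and density `g` satisfying
`g(1-t) = c t^β + O(t^{β+δ})` as `t → 0⁺` with `c, δ, β > 0`.  For each `n ≥ 2`, `T n ω` is the `n × n` transition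
matrix of the memoryless learner (with `a₁ = 1` for the correct concept, indexed by `0`),
`Q n ω N` is the probability of holding the correct concept after `N` sampling events,
and `NΔ n ω` is the least `N` such that `Q n ω M ≥ 1 - Δ` for all `M ≥ N`. Then there are
constants `0 < c₁ < c₂` with `P(c₁ < NΔ/(|log Δ| n) < c₂) → 1` as `n → ∞`. -/
theorem memoryless_learner_time_beta_pos
    {Ω : Type*} [MeasurableSpace Ω] (P : Measure Ω) [IsProbabilityMeasure P]
    (a : ℕ → Ω → ℝ) (hmeas : ∀ i, Measurable (a i))
    (hindep : iIndepFun a P)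
    (hval : ∀ i ω, a i ω ∈ Set.Ico (0 : ℝ) 1)
    (g : ℝ → ℝ)
    (hpdf : ∀ i, Measure.map (a i) P = volume.withDensity (fun t => ENNReal.ofReal (g t)))
    (c δ β : ℝ) (hδ : 0 < δ) (hβ : 0 < β)
    (hg : (fun t => g (1 - t) - c * t ^ β) =O[nhdsWithin 0 (Set.Ioi 0)] (fun t => t ^ (β + δ)))
    (Δ : ℝ) (hΔ : 0 < Δ) (hΔ' : Δ < 1)
    (T : (n : ℕ) → Ω → Matrix (Fin n) (Fin n) ℝ)
    (hT : ∀ n ω (i j : Fin n),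
      T n ω i j =
        if i = j then (if (i : ℕ) = 0 then 1 else a (i : ℕ) ω)
        else (1 - (if (i : ℕ) = 0 then 1 else a (i : ℕ) ω)) / ((n : ℝ) - 1))
    (Q : (n : ℕ) → Ω → ℕ → ℝ)
    (hQ : ∀ n (hn : 2 ≤ n) (ω : Ω) (N : ℕ),
      Q n ω N = Matrix.vecMul (fun _ => 1 / (n : ℝ)) ((T n ω) ^ N) ⟨0, by omega⟩)
    (NΔ : ℕ → Ω → ℕ)
    (hNΔ : ∀ n ω, NΔ n ω = sInf {N : ℕ | ∀ M, N ≤ M → 1 - Δ ≤ Q n ω M}) :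
    ∃ C₁ C₂ : ℝ, 0 < C₁ ∧ 0 < C₂ ∧
      Tendsto (fun n : ℕ =>
          P {ω | C₁ < (NΔ n ω : ℝ) / (|Real.log Δ| * n) ∧
                 (NΔ n ω : ℝ) / (|Real.log Δ| * n) < C₂})
        atTop (nhds 1) := by
  open MemorylessLearner in
  obtain ⟨K, hK, hA⟩ := exists_pos_tendsto_measure_sum_inv_one_sub_le hmeas hindep
    (fun i ω => (hval i ω).2) hβ hpdf (isBigO_rpow_of_isBigO_sub hδ.le hg)
  have hL : 0 < |Real.log Δ| := abs_pos.mpr (Real.log_neg hΔ hΔ').ne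
  refine ⟨(1 - Δ) / (2 * |Real.log Δ|), (K / Δ + 1) / |Real.log Δ|,
    div_pos (sub_pos.mpr hΔ') (by positivity), by positivity,
    tendsto_of_tendsto_of_tendsto_of_le_of_le' hA tendsto_const_nhds ?_
      (.of_forall fun n => prob_le_one)⟩
  filter_upwards [tendsto_natCast_atTop_atTop.eventually_gt_atTop (2 + 2 / (1 - Δ)),
    eventually_ge_atTop 2] with n hnΔ hn
  refine measure_mono fun ω (hω : ∑ i ∈ Finset.range n, (1 - a i ω)⁻¹ ≤ K * n) => ?_
  have hN : NΔ n ω = convergenceTime n (overlaps n (a · ω)) ⟨0, by omega⟩ Δ := by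
    have hT' : T n ω = transitionMatrix n (overlaps n (a · ω)) := Matrix.ext (hT n ω)
    simp_rw [hNΔ, convergenceTime, hQ n hn ω, hT']
    rfl
  rw [Set.mem_ofPred_eq, hN]
  exact convergenceTime_overlaps_div_mem_Ioo (hval · ω) rfl hΔ hΔ' hL hnΔ hω
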